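/- Pointwise strong consistency of the empirical scaled upper tail distribution function: if G is a continuous, strictly increasing distribution function satisfying s^u > 0, then for every t > 0, \hat F^u_n(t) → F^u(t) almost surely as n → ∞. -/

import Mathlib

open MeasureTheory ProbabilityTheory Filter Set
open scoped Classical

noncomputable section

/-- The cumulative distribution function of a probability measure `μ` on `ℝ`:
`G(x) = μ((-∞, x])`. -/
def popCDF (μ : Measure ℝ) (x : ℝ) : ℝ := (μ (Iic x)).toReal

/-- The quantile function `G⁻¹(a) = inf {x : a ≤ G(x)}`. -/
def popQuantile (μ : Measure ℝ) (a : ℝ) : ℝ := sInf {x : ℝ | a ≤ popCDF μ x}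

/-- Upper quantile `η^u = G⁻¹(1 - α)`. -/
def etaU (μ : Measure ℝ) (α : ℝ) : ℝ := popQuantile μ (1 - α)

/-- Lower quantile `η^l = G⁻¹(α)`. -/
def etaL (μ : Measure ℝ) (α : ℝ) : ℝ := popQuantile μ α

/-- Conditional CDF of `X - η^u` given `X > η^u`, evaluated at `t`. -/
def tailCDFU (μ : Measure ℝ) (α t : ℝ) : ℝ :=
  (μ (Ioc (etaU μ α) (etaU μ α + t))).toReal / (μ (Ioi (etaU μ α))).toReal

/-- Conditional CDF of `η^l - X` given `X < η^l`, evaluated at `t`. -/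
def tailCDFL (μ : Measure ℝ) (α t : ℝ) : ℝ :=
  (μ (Ico (etaL μ α - t) (etaL μ α))).toReal / (μ (Iio (etaL μ α))).toReal

/-- `s^u`: the median of the conditional distribution of `X - η^u` given `X > η^u`. -/
def sU (μ : Measure ℝ) (α : ℝ) : ℝ := sInf {t : ℝ | 1 / 2 ≤ tailCDFU μ α t}

/-- `s^l`: the median of the conditional distribution of `η^l - X` given `X < η^l`. -/
def sL (μ : Measure ℝ) (α : ℝ) : ℝ := sInf {t : ℝ | 1 / 2 ≤ tailCDFL μ α t}

/-- Scaled upper tail distribution `F^u(t) = P((X - η^u)/s^u ≤ t | X > η^u)`. -/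
def FU (μ : Measure ℝ) (α t : ℝ) : ℝ := tailCDFU μ α (sU μ α * t)

/-- Scaled lower tail distribution `F^l(t) = P((η^l - X)/s^l ≤ t | X < η^l)`. -/
def FL (μ : Measure ℝ) (α t : ℝ) : ℝ := tailCDFL μ α (sL μ α * t)

/-- The reference distribution `F₀(t) = 1 - exp(-log 2 · t)`. -/
def F0 (t : ℝ) : ℝ := 1 - Real.exp (-Real.log 2 * t)

/-- The threshold `t₀ = 1 / log 2`. -/
def t0 : ℝ := 1 / Real.log 2

/-- The multiset of the first `n` observations of the process `X` at outcome `ω`. -/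
def sample {Ω : Type*} (X : ℕ → Ω → ℝ) (n : ℕ) (ω : Ω) : Multiset ℝ :=
  (Finset.range n).val.map fun i => X i ω

/-- The `k`-th order statistic (1-indexed) of a finite multiset of reals. -/
def orderStat (s : Multiset ℝ) (k : ℕ) : ℝ := (s.sort (· ≤ ·)).getD (k - 1) 0

/-- The sample median of a finite multiset of `m` reals: its `⌈m/2⌉`-th order statistic. -/
def sampleMedian (s : Multiset ℝ) : ℝ := orderStat s (Nat.ceil ((s.card : ℝ) / 2))

/-- The sample upper quantile `η̂^u_n = X_(⌈n(1-α)⌉)`. -/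
def etaUn {Ω : Type*} (X : ℕ → Ω → ℝ) (α : ℝ) (n : ℕ) (ω : Ω) : ℝ :=
  orderStat (sample X n ω) (Nat.ceil ((n : ℝ) * (1 - α)))

/-- The sample lower quantile `η̂^l_n = X_(⌈nα⌉)`. -/
def etaLn {Ω : Type*} (X : ℕ → Ω → ℝ) (α : ℝ) (n : ℕ) (ω : Ω) : ℝ :=
  orderStat (sample X n ω) (Nat.ceil ((n : ℝ) * α))

/-- The sample upper tail scale `ŝ^u_n = med{X_i - η̂^u_n : X_i > η̂^u_n}`. -/
def sUn {Ω : Type*} (X : ℕ → Ω → ℝ) (α : ℝ) (n : ℕ) (ω : Ω) : ℝ :=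
  sampleMedian (((sample X n ω).filter fun x => etaUn X α n ω < x).map
    fun x => x - etaUn X α n ω)

/-- The sample lower tail scale `ŝ^l_n = med{η̂^l_n - X_i : X_i < η̂^l_n}`. -/
def sLn {Ω : Type*} (X : ℕ → Ω → ℝ) (α : ℝ) (n : ℕ) (ω : Ω) : ℝ :=
  sampleMedian (((sample X n ω).filter fun x => x < etaLn X α n ω).map
    fun x => etaLn X α n ω - x)

/-- Empirical scaled upper tail CDF
`F̂^u_n(t) = #{i ≤ n : 0 < (X_i - η̂^u_n)/ŝ^u_n ≤ t} / #{i ≤ n : X_i > η̂^u_n}`. -/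
def FUn {Ω : Type*} (X : ℕ → Ω → ℝ) (α : ℝ) (n : ℕ) (ω : Ω) (t : ℝ) : ℝ :=
  (((sample X n ω).filter fun x =>
      0 < (x - etaUn X α n ω) / sUn X α n ω ∧ (x - etaUn X α n ω) / sUn X α n ω ≤ t).card : ℝ) /
    (((sample X n ω).filter fun x => etaUn X α n ω < x).card : ℝ)

/-- Empirical scaled lower tail CDF
`F̂^l_n(t) = #{i ≤ n : 0 < (η̂^l_n - X_i)/ŝ^l_n ≤ t} / #{i ≤ n : X_i < η̂^l_n}`. -/
def FLn {Ω : Type*} (X : ℕ → Ω → ℝ) (α : ℝ) (n : ℕ) (ω : Ω) (t : ℝ) : ℝ :=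
  (((sample X n ω).filter fun x =>
      0 < (etaLn X α n ω - x) / sLn X α n ω ∧ (etaLn X α n ω - x) / sLn X α n ω ≤ t).card : ℝ) /
    (((sample X n ω).filter fun x => x < etaLn X α n ω).card : ℝ)

/-- Proportion of flagged upper tail outliers `d̂^u_n = sup_{t ≥ t₀} {F₀(t) - F̂^u_n(t)}⁺`. -/
def dUn {Ω : Type*} (X : ℕ → Ω → ℝ) (α : ℝ) (n : ℕ) (ω : Ω) : ℝ :=
  ⨆ t : Ici t0, max 0 (F0 t - FUn X α n ω t)

/-- Proportion of flagged lower tail outliers `d̂^l_n = sup_{t ≥ t₀} {F₀(t) - F̂^l_n(t)}⁺`. -/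
def dLn {Ω : Type*} (X : ℕ → Ω → ℝ) (α : ℝ) (n : ℕ) (ω : Ω) : ℝ :=
  ⨆ t : Ici t0, max 0 (F0 t - FLn X α n ω t)

/-- Upper filtering threshold `t̂^u_n = min{t : F̂^u_n(t) ≥ 1 - d̂^u_n}`. -/
def tUn {Ω : Type*} (X : ℕ → Ω → ℝ) (α : ℝ) (n : ℕ) (ω : Ω) : ℝ :=
  sInf {t : ℝ | 1 - dUn X α n ω ≤ FUn X α n ω t}

/-- Lower filtering threshold `t̂^l_n = min{t : F̂^l_n(t) ≥ 1 - d̂^l_n}`. -/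
def tLn {Ω : Type*} (X : ℕ → Ω → ℝ) (α : ℝ) (n : ℕ) (ω : Ω) : ℝ :=
  sInf {t : ℝ | 1 - dLn X α n ω ≤ FLn X α n ω t}

/-- The filter flags observation `X_i` (among the first `n`) when
`X_i > η̂^u_n + ŝ^u_n t̂^u_n` or `X_i < η̂^l_n - ŝ^l_n t̂^l_n`. -/
def flagged {Ω : Type*} (X : ℕ → Ω → ℝ) (α : ℝ) (n i : ℕ) (ω : Ω) : Prop :=
  X i ω > etaUn X α n ω + sUn X α n ω * tUn X α n ω ∨
    X i ω < etaLn X α n ω - sLn X α n ω * tLn X α n ω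

end

/-!
By the strong law of large numbers, almost surely the empirical distribution function of the
sample converges to `G` at every rational point, hence (by monotonicity and continuity of `G`)
along every convergent sequence of arguments. An order statistic is at most `y` exactly when
enough observations are at most `y`, so sample quantiles of level `p` converge to the population
quantile `G⁻¹(p)`. The threshold `η̂` is such a quantile for `p = 1 - α`; and `η̂ + ŝ` is again
a sample order statistic, of rank `#{X_i ≤ η̂} + ⌈m/2⌉` with `m = #{X_i > η̂}`, hence a quantile of
level `(1 - α) + α/2 = G(η + s)`. Finally `F̂(t)` is the ratio of
`#{η̂ < X_i ≤ η̂ + ŝ t} / n → G(η + s t) - G(η)` and `m / n → α`.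
-/

open Topology

section Population

variable {μ : Measure ℝ} [IsProbabilityMeasure μ]

lemma popCDF_eq_cdf : popCDF μ = cdf μ := by
  ext x
  rw [popCDF, cdf_eq_real, measureReal_def]

lemma measureReal_Ioc_eq_popCDF_sub {a b : ℝ} (hab : a ≤ b) :
    μ.real (Ioc a b) = popCDF μ b - popCDF μ a := by
  rw [← Iic_sdiff_Iic, measureReal_sdiff (Iic_subset_Iic.2 hab) measurableSet_Iic, popCDF,
    popCDF, measureReal_def, measureReal_def]

lemma measureReal_Ioi_eq_one_sub_popCDF (a : ℝ) : μ.real (Ioi a) = 1 - popCDF μ a := by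
  rw [← compl_Iic, probReal_compl_eq_one_sub measurableSet_Iic, popCDF, measureReal_def]

lemma popCDF_popQuantile (hGc : Continuous (popCDF μ)) (hGm : StrictMono (popCDF μ)) {p : ℝ}
    (hp : p ∈ Ioo (0 : ℝ) 1) : popCDF μ (popQuantile μ p) = p := by
  rw [popCDF_eq_cdf] at hGc hGm ⊢
  have hbot := (tendsto_cdf_atBot μ).eventually (eventually_lt_nhds hp.1)
  have htop := (tendsto_cdf_atTop μ).eventually (eventually_gt_nhds hp.2)
  obtain ⟨a, ha⟩ := hbot.exists
  obtain ⟨b, hb⟩ := htop.exists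
  obtain ⟨x, -, hx⟩ := intermediate_value_uIcc hGc.continuousOn
    (mem_uIcc_of_le (a := cdf μ a) (b := cdf μ b) ha.le hb.le)
  have hset : {y : ℝ | p ≤ cdf μ y} = Ici x := by
    ext y
    rw [mem_ofPred_eq, mem_Ici, ← hx, hGm.le_iff_le]
  rw [popQuantile, popCDF_eq_cdf, hset, csInf_Ici, hx]

variable {α : ℝ}

lemma popCDF_etaU (hGc : Continuous (popCDF μ)) (hGm : StrictMono (popCDF μ)) (hα0 : 0 < α)
    (hα1 : α < 1) : popCDF μ (etaU μ α) = 1 - α :=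
  popCDF_popQuantile hGc hGm ⟨by linarith, by linarith⟩

lemma tailCDFU_eq (hη : popCDF μ (etaU μ α) = 1 - α) {t : ℝ} (ht : 0 ≤ t) :
    tailCDFU μ α t = (popCDF μ (etaU μ α + t) - (1 - α)) / α := by
  rw [tailCDFU, ← measureReal_def, ← measureReal_def, measureReal_Ioc_eq_popCDF_sub (by linarith),
    measureReal_Ioi_eq_one_sub_popCDF, hη, sub_sub_cancel]

lemma popCDF_etaU_add_sU (hGc : Continuous (popCDF μ)) (hGm : StrictMono (popCDF μ))
    (hα0 : 0 < α) (hα1 : α < 1) : popCDF μ (etaU μ α + sU μ α) = 1 - α / 2 := by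
  have hη := popCDF_etaU hGc hGm hα0 hα1
  set x := popQuantile μ (1 - α / 2)
  have hx : popCDF μ x = 1 - α / 2 := popCDF_popQuantile hGc hGm ⟨by linarith, by linarith⟩
  have hηx : etaU μ α < x := hGm.lt_iff_lt.1 (by rw [hη, hx]; linarith)
  have hset : {t | 1 / 2 ≤ tailCDFU μ α t} = Ici (x - etaU μ α) := by
    ext t
    rw [mem_ofPred_eq, mem_Ici]
    rcases le_or_gt 0 t with ht | ht
    · rw [tailCDFU_eq hη ht, le_div_iff₀ hα0, sub_le_iff_le_add']
      conv_rhs => rw [← hGm.le_iff_le, hx]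
      constructor <;> intro h <;> linarith
    · rw [tailCDFU, Ioc_eq_empty (by linarith)]
      simp only [measure_empty, ENNReal.toReal_zero, zero_div]
      constructor <;> intro h <;> linarith
  rw [sU, hset, csInf_Ici, add_sub_cancel, hx]

end Population

lemma List.SortedLE.getElem_le_iff_lt_countP {l : List ℝ} (hl : l.SortedLE) {i : ℕ}
    (hi : i < l.length) (y : ℝ) : l[i] ≤ y ↔ i < l.countP (· ≤ y) := by
  constructor
  · intro h
    have htake : (l.take (i + 1)).countP (· ≤ y) = i + 1 := by
      rw [List.countP_eq_length.2, List.length_take]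
      · omega
      intro z hz
      obtain ⟨j, hj, rfl⟩ := List.mem_take_iff_getElem.1 hz
      exact decide_eq_true ((hl.getElem_le_getElem_of_le (by omega)).trans h)
    have := (List.take_sublist (i + 1) l).countP_le (p := (· ≤ y))
    omega
  · intro h
    by_contra! hy
    have hdrop : (l.drop i).countP (· ≤ y) = 0 := by
      rw [List.countP_eq_zero]
      intro z hz
      obtain ⟨j, hj, rfl⟩ := List.mem_drop_iff_getElem.1 hz
      simpa using hy.trans_le (hl.getElem_le_getElem_of_le (by omega))
    have hsplit := List.countP_append (p := (· ≤ y)) (l₁ := l.take i) (l₂ := l.drop i)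
    rw [List.take_append_drop] at hsplit
    have := (l.take i).countP_le_length (p := (· ≤ y))
    rw [List.length_take] at this
    omega

lemma orderStat_le_iff {s : Multiset ℝ} {k : ℕ} (hk1 : 1 ≤ k) (hk2 : k ≤ Multiset.card s)
    (y : ℝ) : orderStat s k ≤ y ↔ k ≤ s.countP (· ≤ y) := by
  have hlen := s.length_sort (· ≤ ·)
  have hsorted := List.sortedLE_iff_pairwise.2 (s.pairwise_sort (· ≤ ·))
  rw [orderStat, List.getD_eq_getElem _ _ (by omega),
    hsorted.getElem_le_iff_lt_countP (by omega), ← s.sort_eq (· ≤ ·), Multiset.coe_countP,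
    s.sort_eq]
  omega

lemma Multiset.countP_mono_left {α : Type*} {p q : α → Prop} [DecidablePred p] [DecidablePred q]
    (s : Multiset α) (h : ∀ x, p x → q x) : s.countP p ≤ s.countP q := by
  simpa only [countP_eq_card_filter] using card_le_card (s.monotone_filter_right h)

lemma Multiset.countP_lt_add_countP_le (s : Multiset ℝ) (a : ℝ) :
    s.countP (a < ·) + s.countP (· ≤ a) = card s := by
  rw [s.card_eq_countP_add_countP (· ≤ a), add_comm]
  simp only [not_le]

lemma Multiset.countP_Ioc_add_countP_le (s : Multiset ℝ) {a b : ℝ} (hab : a ≤ b) :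
    s.countP (· ∈ Set.Ioc a b) + s.countP (· ≤ a) = s.countP (· ≤ b) := by
  rw [s.countP_eq_countP_filter_add (· ≤ b) (· ≤ a), countP_filter, countP_filter, add_comm]
  congr 1 <;> refine countP_congr rfl fun x _ => ?_
  · simp only [eq_iff_iff]
    exact ⟨fun hx => ⟨hx.trans hab, hx⟩, And.right⟩
  · simp only [Set.mem_Ioc, not_le, eq_iff_iff]
    exact ⟨fun hx => ⟨hx.2, hx.1⟩, fun hx => ⟨hx.2, hx.1⟩⟩

lemma orderStat_map_sub_filter_lt {s : Multiset ℝ} {a : ℝ} {j : ℕ} (hj1 : 1 ≤ j)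
    (hj : j ≤ s.countP (a < ·)) :
    orderStat ((s.filter (a < ·)).map (· - a)) j = orderStat s (s.countP (· ≤ a) + j) - a := by
  have hcard : Multiset.card ((s.filter (a < ·)).map (· - a)) = s.countP (a < ·) := by
    rw [Multiset.card_map, Multiset.countP_eq_card_filter]
  have hcount (c : ℝ) :
      ((s.filter (a < ·)).map (· - a)).countP (· ≤ c) = s.countP (· ∈ Ioc a (a + c)) := by
    rw [Multiset.countP_map, ← Multiset.countP_eq_card_filter, Multiset.countP_filter]
    refine Multiset.countP_congr rfl fun x _ => ?_
    simp only [mem_Ioc, sub_le_iff_le_add', and_comm]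
  have htotal := s.countP_lt_add_countP_le a
  refine eq_of_forall_ge_iff fun c => ?_
  rw [orderStat_le_iff hj1 (hcard ▸ hj), hcount, sub_le_iff_le_add',
    orderStat_le_iff (by omega) (by omega)]
  rcases le_or_gt 0 c with hc | hc
  · rw [← s.countP_Ioc_add_countP_le (by linarith : a ≤ a + c)]
    omega
  · have hempty : s.countP (· ∈ Ioc a (a + c)) = 0 := by
      simp [Ioc_eq_empty (by linarith : ¬a < a + c)]
    have hmono := s.countP_mono_left (p := (· ≤ a + c)) (q := (· ≤ a)) fun x hx => by linarith
    omega

lemma sampleMedian_map_sub_filter_lt {s : Multiset ℝ} {a : ℝ} (h : 0 < s.countP (a < ·)) :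
    sampleMedian ((s.filter (a < ·)).map (· - a)) =
      orderStat s (s.countP (· ≤ a) + ⌈(s.countP (a < ·) : ℝ) / 2⌉₊) - a := by
  have hm : (0 : ℝ) < s.countP (a < ·) := by exact_mod_cast h
  rw [sampleMedian, Multiset.card_map, ← Multiset.countP_eq_card_filter]
  exact orderStat_map_sub_filter_lt (Nat.one_le_ceil_iff.2 (by positivity))
    (Nat.ceil_le.2 (by linarith))

lemma card_sample {Ω : Type*} (X : ℕ → Ω → ℝ) (n : ℕ) (ω : Ω) :
    Multiset.card (sample X n ω) = n := by
  simp [sample]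

section EmpiricalConvergence

lemma Nat.lt_of_cast_div_lt_cast_div {a b n : ℕ} (h : (a : ℝ) / n < b / n) : a < b := by
  by_contra! hba
  exact h.not_ge (div_le_div_of_nonneg_right (by exact_mod_cast hba) n.cast_nonneg)

lemma tendsto_natCeil_div {a : ℕ → ℝ} {c : ℝ} (ha : ∀ n, 0 ≤ a n)
    (h : Tendsto (fun n => a n / n) atTop (𝓝 c)) :
    Tendsto (fun n => (⌈a n⌉₊ : ℝ) / n) atTop (𝓝 c) := by
  have hup : Tendsto (fun n : ℕ => a n / n + 1 / n) atTop (𝓝 c) := by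
    simpa using h.add tendsto_one_div_atTop_nhds_zero_nat
  refine tendsto_of_tendsto_of_tendsto_of_le_of_le h hup (fun n => ?_) (fun n => ?_)
  · exact div_le_div_of_nonneg_right (Nat.le_ceil _) n.cast_nonneg
  · rw [← add_div]
    exact div_le_div_of_nonneg_right (Nat.ceil_lt_add_one (ha n)).le n.cast_nonneg

variable {s : ℕ → Multiset ℝ} {G : ℝ → ℝ}

def EcdfTendsto (s : ℕ → Multiset ℝ) (G : ℝ → ℝ) : Prop :=
  ∀ ⦃u : ℕ → ℝ⦄ ⦃y : ℝ⦄, Tendsto u atTop (𝓝 y) →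
    Tendsto (fun n => ((s n).countP (· ≤ u n) : ℝ) / n) atTop (𝓝 (G y))

/-- Pólya's argument: each empirical distribution function is monotone and `G` is continuous. -/
lemma ecdfTendsto_of_tendsto_rat (hG : Continuous G)
    (hs : ∀ q : ℚ, Tendsto (fun n => ((s n).countP (· ≤ (q : ℝ)) : ℝ) / n) atTop (𝓝 (G q))) :
    EcdfTendsto s G := by
  intro u y hu
  have hmono (n : ℕ) {a b : ℝ} (hab : a ≤ b) :
      ((s n).countP (· ≤ a) : ℝ) / n ≤ ((s n).countP (· ≤ b) : ℝ) / n :=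
    div_le_div_of_nonneg_right
      (by exact_mod_cast (s n).countP_mono_left fun x (hx : x ≤ a) => hx.trans hab) n.cast_nonneg
  refine tendsto_order.2 ⟨fun c hc => ?_, fun c hc => ?_⟩
  · obtain ⟨l, hly, hl⟩ := exists_Ioc_subset_of_mem_nhds
      ((isOpen_Ioi.preimage hG).mem_nhds hc) ⟨y - 1, by linarith⟩
    obtain ⟨q, hlq, hqy⟩ := exists_rat_btwn hly
    filter_upwards [(hs q).eventually (lt_mem_nhds (hl ⟨hlq, hqy.le⟩)),
      hu.eventually (lt_mem_nhds hqy)] with n hn hun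
    exact hn.trans_le (hmono n hun.le)
  · obtain ⟨l, hyl, hl⟩ := exists_Ico_subset_of_mem_nhds
      ((isOpen_Iio.preimage hG).mem_nhds hc) ⟨y + 1, by linarith⟩
    obtain ⟨q, hyq, hql⟩ := exists_rat_btwn hyl
    filter_upwards [(hs q).eventually (gt_mem_nhds (hl ⟨hyq.le, hql⟩)),
      hu.eventually (gt_mem_nhds hyq)] with n hn hun
    exact (hmono n hun.le).trans_lt hn

theorem tendsto_orderStat_of_tendsto_countP (hG : StrictMono G)
    (hs : ∀ y, Tendsto (fun n => ((s n).countP (· ≤ y) : ℝ) / n) atTop (𝓝 (G y)))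
    {k : ℕ → ℕ} {ξ : ℝ} (hk : Tendsto (fun n => (k n : ℝ) / n) atTop (𝓝 (G ξ))) :
    Tendsto (fun n => orderStat (s n) (k n)) atTop (𝓝 ξ) := by
  have below (y : ℝ) (hy : y < ξ) : ∀ᶠ n in atTop, (s n).countP (· ≤ y) < k n :=
    ((hs y).eventually_lt hk (hG hy)).mono fun n hn => Nat.lt_of_cast_div_lt_cast_div hn
  have above (y : ℝ) (hy : ξ < y) : ∀ᶠ n in atTop, k n < (s n).countP (· ≤ y) :=
    (hk.eventually_lt (hs y) (hG hy)).mono fun n hn => Nat.lt_of_cast_div_lt_cast_div hn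
  have hrank : ∀ᶠ n in atTop, 1 ≤ k n ∧ k n ≤ Multiset.card (s n) := by
    filter_upwards [below (ξ - 1) (by linarith), above (ξ + 1) (by linarith)] with n h1 h2
    exact ⟨by omega, h2.le.trans ((s n).countP_le_card _)⟩
  refine tendsto_order.2 ⟨fun a ha => ?_, fun b hb => ?_⟩
  · filter_upwards [below a ha, hrank] with n hn hk'
    exact lt_of_not_ge fun h => ((orderStat_le_iff hk'.1 hk'.2 a).1 h).not_gt hn
  · obtain ⟨b', hξb', hb'b⟩ := exists_between hb
    filter_upwards [above b' hξb', hrank] with n hn hk'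
    exact ((orderStat_le_iff hk'.1 hk'.2 b').2 hn.le).trans_lt hb'b

end EmpiricalConvergence

section SampleTail

variable {Ω : Type*} {X : ℕ → Ω → ℝ} {ω : Ω} {G : ℝ → ℝ} {α η σ : ℝ}

lemma tendsto_etaUn (hX : EcdfTendsto (fun n => sample X n ω) G) (hG : StrictMono G)
    (hα : α ≤ 1) (hη : G η = 1 - α) : Tendsto (fun n => etaUn X α n ω) atTop (𝓝 η) := by
  refine tendsto_orderStat_of_tendsto_countP hG (fun y => hX tendsto_const_nhds) ?_
  refine hη ▸ tendsto_natCeil_div (fun n => mul_nonneg n.cast_nonneg (by linarith)) ?_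
  refine tendsto_const_nhds.congr' ((eventually_ne_atTop 0).mono fun n hn => ?_)
  field_simp

lemma tendsto_countP_etaUn_lt_div (hX : EcdfTendsto (fun n => sample X n ω) G)
    (hG : StrictMono G) (hα : α ≤ 1) (hη : G η = 1 - α) :
    Tendsto (fun n => ((sample X n ω).countP (etaUn X α n ω < ·) : ℝ) / n) atTop (𝓝 α) := by
  have h := tendsto_const_nhds (x := (1 : ℝ)) |>.sub (hX (tendsto_etaUn hX hG hα hη))
  rw [hη, sub_sub_cancel] at h
  refine h.congr' ((eventually_ne_atTop 0).mono fun n hn => ?_)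
  have htotal : ((sample X n ω).countP (etaUn X α n ω < ·) : ℝ) +
      (sample X n ω).countP (· ≤ etaUn X α n ω) = n := by
    exact_mod_cast ((sample X n ω).countP_lt_add_countP_le _).trans (card_sample X n ω)
  rw [eq_div_iff (Nat.cast_ne_zero.2 hn), sub_mul, div_mul_cancel₀ _ (Nat.cast_ne_zero.2 hn),
    one_mul]
  linarith

lemma tendsto_sUn (hX : EcdfTendsto (fun n => sample X n ω) G) (hG : StrictMono G)
    (hα0 : 0 < α) (hα1 : α ≤ 1) (hη : G η = 1 - α) (hσ : G (η + σ) = 1 - α / 2) :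
    Tendsto (fun n => sUn X α n ω) atTop (𝓝 σ) := by
  have heta := tendsto_etaUn hX hG hα1 hη
  have htail := tendsto_countP_etaUn_lt_div hX hG hα1 hη
  have hrank : Tendsto (fun n => (((sample X n ω).countP (· ≤ etaUn X α n ω) +
      ⌈((sample X n ω).countP (etaUn X α n ω < ·) : ℝ) / 2⌉₊ : ℕ) : ℝ) / n) atTop
      (𝓝 (G (η + σ))) := by
    rw [hσ, show 1 - α / 2 = G η + α / 2 by rw [hη]; ring]
    push_cast
    simp only [add_div]
    refine (hX heta).add (tendsto_natCeil_div (fun n => by positivity) ?_)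
    simpa only [div_right_comm] using htail.div_const 2
  have hupper := (tendsto_orderStat_of_tendsto_countP hG (fun y => hX tendsto_const_nhds)
    hrank).sub heta
  rw [add_sub_cancel_left] at hupper
  refine hupper.congr' ?_
  filter_upwards [htail.eventually (eventually_gt_nhds hα0)] with n hn
  refine (sampleMedian_map_sub_filter_lt (Nat.pos_of_ne_zero fun h0 => ?_)).symm
  simp [h0] at hn

lemma FUn_eq {n : ℕ} {t : ℝ} (hs : 0 < sUn X α n ω) :
    FUn X α n ω t =
      ((sample X n ω).countP (· ∈ Ioc (etaUn X α n ω) (etaUn X α n ω + sUn X α n ω * t)) : ℝ) /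
        (sample X n ω).countP (etaUn X α n ω < ·) := by
  have hcount : (sample X n ω).countP (fun x => 0 < (x - etaUn X α n ω) / sUn X α n ω ∧
      (x - etaUn X α n ω) / sUn X α n ω ≤ t) =
      (sample X n ω).countP (· ∈ Ioc (etaUn X α n ω) (etaUn X α n ω + sUn X α n ω * t)) :=
    Multiset.countP_congr rfl fun x _ => by
      rw [div_pos_iff_of_pos_right hs, div_le_iff₀ hs, sub_pos, sub_le_iff_le_add', mul_comm]
      rfl
  rw [FUn, ← Multiset.countP_eq_card_filter, ← Multiset.countP_eq_card_filter, hcount]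

theorem tendsto_FUn (hX : EcdfTendsto (fun n => sample X n ω) G) (hG : StrictMono G)
    (hα0 : 0 < α) (hα1 : α ≤ 1) (hη : G η = 1 - α) (hσ : G (η + σ) = 1 - α / 2)
    (hσ0 : 0 < σ) {t : ℝ} (ht : 0 < t) :
    Tendsto (fun n => FUn X α n ω t) atTop (𝓝 ((G (η + σ * t) - G η) / α)) := by
  have heta := tendsto_etaUn hX hG hα1 hη
  have hs := tendsto_sUn hX hG hα0 hα1 hη hσ
  have hs_pos := hs.eventually (eventually_gt_nhds hσ0)
  have hnum : Tendsto (fun n => ((sample X n ω).countP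
      (· ∈ Ioc (etaUn X α n ω) (etaUn X α n ω + sUn X α n ω * t)) : ℝ) / n) atTop
      (𝓝 (G (η + σ * t) - G η)) := by
    refine ((hX (heta.add (hs.mul_const t))).sub (hX heta)).congr' ?_
    filter_upwards [hs_pos] with n hn
    rw [← sub_div, ← (sample X n ω).countP_Ioc_add_countP_le (by nlinarith)]
    push_cast
    ring
  refine (hnum.div (tendsto_countP_etaUn_lt_div hX hG hα1 hη) hα0.ne').congr' ?_
  filter_upwards [hs_pos, eventually_ne_atTop 0] with n hn hn0
  rw [Pi.div_apply, div_div_div_cancel_right₀ (Nat.cast_ne_zero.2 hn0), FUn_eq hn]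

end SampleTail

lemma ae_tendsto_countP_sample_le_div {Ω : Type*} [MeasurableSpace Ω] {P : Measure Ω}
    [IsFiniteMeasure P] {μ : Measure ℝ} {X : ℕ → Ω → ℝ} (hXmeas : ∀ i, Measurable (X i))
    (hindep : iIndepFun X P) (hident : ∀ i, Measure.map (X i) P = μ) (y : ℝ) :
    ∀ᵐ ω ∂P, Tendsto (fun n => ((sample X n ω).countP (· ≤ y) : ℝ) / n) atTop
      (𝓝 (popCDF μ y)) := by
  set f : ℝ → ℝ := (Iic y).indicator 1
  have hf : Measurable f := measurable_one.indicator measurableSet_Iic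
  have hint : Integrable (f ∘ X 0) P :=
    (integrable_const (1 : ℝ)).mono' (hf.comp (hXmeas 0)).aestronglyMeasurable
      (Eventually.of_forall fun ω => by
        simp only [Function.comp_apply, f, indicator_apply, Pi.one_apply]
        split_ifs <;> norm_num)
  have hlaw := strong_law_ae_real (fun i => f ∘ X i) hint
    (fun i j hij => (hindep.indepFun hij).comp hf hf)
    (fun i => (IdentDistrib.mk (hXmeas i).aemeasurable (hXmeas 0).aemeasurable
      (by rw [hident i, hident 0])).comp hf)
  have hmean : P[f ∘ X 0] = popCDF μ y := by
    rw [popCDF, ← measureReal_def, ← hident 0, ← integral_indicator_one measurableSet_Iic,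
      integral_map (hXmeas 0).aemeasurable hf.aestronglyMeasurable]
    rfl
  filter_upwards [hlaw] with ω hω
  rw [hmean] at hω
  convert hω using 3 with n
  simp only [sample, Finset.range_val, Multiset.countP_map, Function.comp_apply, indicator_apply,
    mem_Iic, Pi.one_apply, Finset.sum_boole, Nat.cast_inj, f]
  rfl

/-- **Pointwise strong consistency of the empirical scaled upper tail distribution
function.** If `G` is a continuous, strictly increasing distribution function with
`s^u > 0`, then for an i.i.d. sample from `G` and every `t > 0`,
`F̂^u_n(t) → F^u(t)` almost surely as `n → ∞`. -/
theorem empirical_scaled_upper_tail_consistency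
    {Ω : Type*} [MeasurableSpace Ω] (P : Measure Ω) [IsProbabilityMeasure P]
    (μ : Measure ℝ) [IsProbabilityMeasure μ]
    (hGcont : Continuous (popCDF μ)) (hGmono : StrictMono (popCDF μ))
    (α : ℝ) (hα : α ∈ Ioo (0 : ℝ) (1 / 2))
    (hsU : 0 < sU μ α)
    (X : ℕ → Ω → ℝ) (hXmeas : ∀ i, Measurable (X i))
    (hindep : iIndepFun X P)
    (hident : ∀ i, Measure.map (X i) P = μ) :
    ∀ t > (0 : ℝ),
      ∀ᵐ ω ∂P, Tendsto (fun n => FUn X α n ω t) atTop (nhds (FU μ α t)) := by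
  intro t ht
  have hα0 : 0 < α := hα.1
  have hα1 : α < 1 := by linarith [hα.2]
  have hη := popCDF_etaU hGcont hGmono hα0 hα1
  have hσ := popCDF_etaU_add_sU hGcont hGmono hα0 hα1
  have hecdf := ae_all_iff.2 fun q : ℚ => ae_tendsto_countP_sample_le_div hXmeas hindep hident q
  filter_upwards [hecdf] with ω hω
  rw [FU, tailCDFU_eq hη (by positivity), ← hη]
  exact tendsto_FUn (ecdfTendsto_of_tendsto_rat hGcont hω) hGmono hα0 hα1.le hη hσ hsU ht
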